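/- arXiv:2109.15030 — 4 statements merged into one kernel-verified Lean document; each statement's English description precedes it below -/
import Mathlib

section
/- Let a, b ∈ ℝ^n_{≥0} with Σ_{i=1}^n a_i = Σ_{j=1}^n b_j = q, let π ∈ ℝ^{n×n} have strictly positive entries, and let π̂ := Round(π, a, b). Then π̂ is entrywise nonnegative with r(π̂) = a and c(π̂) = b, and ‖π̂ − π‖_1 ≤ 2(‖r(π) − a‖_1 + ‖c(π) − b‖_1), where ‖M‖_1 := Σ_{i,j}|M_{ij}| for matrices and ‖v‖_1 := Σ_i |v_i| for vectors. -/
open scoped BigOperators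

noncomputable section

namespace EOT

/-- Square matrices as functions. -/
abbrev Mat (n : ℕ) := Fin n → Fin n → ℝ

/-- Frobenius inner product ⟨A, B⟩ = Σ_{i,j} A_{ij} B_{ij}. -/
def frob {n : ℕ} (A B : Mat n) : ℝ := ∑ i, ∑ j, A i j * B i j

/-- Row-sum vector r(A) = A 𝟙. -/
def rowSum {n : ℕ} (A : Mat n) : Fin n → ℝ := fun i => ∑ j, A i j

/-- Column-sum vector c(A) = Aᵀ 𝟙. -/
def colSum {n : ℕ} (A : Mat n) : Fin n → ℝ := fun j => ∑ i, A i j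

/-- Entrywise ℓ₁ norm of a matrix. -/
def mnorm1 {n : ℕ} (A : Mat n) : ℝ := ∑ i, ∑ j, |A i j|

/-- ℓ₁ norm of a vector. -/
def vnorm1 {m : ℕ} (v : Fin m → ℝ) : ℝ := ∑ i, |v i|

/-- Euclidean (ℓ₂) norm of a vector. -/
def vnorm2 {m : ℕ} (v : Fin m → ℝ) : ℝ := Real.sqrt (∑ i, v i ^ 2)

/-- c_∞ := max_{k,i,j} |C^k_{ij}|. -/
def cinf {n N : ℕ} (C : Fin N → Mat n) : ℝ := ⨆ k, ⨆ i, ⨆ j, |C k i j|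

/-- ι := min_j log b_j. -/
def iotaMin {n : ℕ} (b : Fin n → ℝ) : ℝ := ⨅ j, Real.log (b j)

/-- ζ^k(f,g,λ)_{ij} = exp((f_i + g_j − λ_k C^k_{ij})/η). -/
def zeta {n N : ℕ} (η : ℝ) (C : Fin N → Mat n) (f g : Fin n → ℝ)
    (lam : Fin N → ℝ) (k : Fin N) : Mat n :=
  fun i j => Real.exp ((f i + g j - lam k * C k i j) / η)

/-- π^k(f,g,λ) = ζ^k(f,g,λ) / Σ_{k'} ‖ζ^{k'}(f,g,λ)‖₁. -/
def piMat {n N : ℕ} (η : ℝ) (C : Fin N → Mat n) (f g : Fin n → ℝ)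
    (lam : Fin N → ℝ) (k : Fin N) : Mat n :=
  fun i j => zeta η C f g lam k i j / ∑ k', mnorm1 (zeta η C f g lam k')

/-- The dual objective F(f,g,λ) = ⟨f,a⟩ + ⟨g,b⟩ − η log(Σ_k ‖ζ^k‖₁) − η. -/
def Fdual {n N : ℕ} (η : ℝ) (C : Fin N → Mat n) (a b : Fin n → ℝ)
    (f g : Fin n → ℝ) (lam : Fin N → ℝ) : ℝ :=
  (∑ i, f i * a i) + (∑ j, g j * b j)
    - η * Real.log (∑ k, mnorm1 (zeta η C f g lam k)) - η

/-- Gradient of F with respect to λ: (∇_λ F)_k = ⟨π^k(f,g,λ), C^k⟩. -/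
def gradLam {n N : ℕ} (η : ℝ) (C : Fin N → Mat n) (f g : Fin n → ℝ)
    (lam : Fin N → ℝ) : Fin N → ℝ :=
  fun k => frob (piMat η C f g lam k) (C k)

/-- `p` is the Euclidean projection of `x` onto the probability simplex. -/
def IsProjSimplex {m : ℕ} (p x : Fin m → ℝ) : Prop :=
  p ∈ stdSimplex ℝ (Fin m) ∧
    ∀ q ∈ stdSimplex ℝ (Fin m),
      vnorm2 (fun k => p k - x k) ≤ vnorm2 (fun k => q k - x k)

/-- Kullback–Leibler divergence KL(v‖w) = Σ_j v_j log(v_j / w_j). -/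
def klVec {m : ℕ} (v w : Fin m → ℝ) : ℝ := ∑ j, v j * Real.log (v j / w j)

/-- The Hamiltonian E(f,g,λ¹,λ²) = F(f,g,λ¹) − (1/(2τ))‖λ¹ − λ²‖₂². -/
def ham {n N : ℕ} (η : ℝ) (C : Fin N → Mat n) (a b : Fin n → ℝ) (τ : ℝ)
    (f g : Fin n → ℝ) (l1 l2 : Fin N → ℝ) : ℝ :=
  Fdual η C a b f g l1 - 1 / (2 * τ) * vnorm2 (fun k => l1 k - l2 k) ^ 2

/-- The rounding procedure Round(A, a, b). -/
def roundMat {n : ℕ} (A : Mat n) (a b : Fin n → ℝ) : Mat n :=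
  let x : Fin n → ℝ := fun i => min (a i / rowSum A i) 1
  let A' : Mat n := fun i j => x i * A i j
  let y : Fin n → ℝ := fun j => min (b j / colSum A' j) 1
  let A'' : Mat n := fun i j => A' i j * y j
  let erra : Fin n → ℝ := fun i => a i - rowSum A'' i
  let errb : Fin n → ℝ := fun j => b j - colSum A'' j
  fun i j => A'' i j + if vnorm1 erra = 0 then 0 else erra i * errb j / vnorm1 erra

/-- The coupling decomposition set Π_{a,b}^N. -/
def coupling {n N : ℕ} (a b : Fin n → ℝ) : Set (Fin N → Mat n) :=
  {P | (∀ k i j, 0 ≤ P k i j) ∧ rowSum (∑ k, P k) = a ∧ colSum (∑ k, P k) = b}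

/-- ℓ(π, λ) = Σ_k λ_k ⟨π^k, C^k⟩. -/
def ell {n N : ℕ} (C : Fin N → Mat n) (P : Fin N → Mat n) (lam : Fin N → ℝ) : ℝ :=
  ∑ k, lam k * frob (P k) (C k)

/-- (P, λ) is an ε-optimal solution of the EOT problem (duality-gap ≤ ε). -/
def epsOptimal {n N : ℕ} (C : Fin N → Mat n) (a b : Fin n → ℝ)
    (P : Fin N → Mat n) (lam : Fin N → ℝ) (ε : ℝ) : Prop :=
  P ∈ coupling (N := N) a b ∧ lam ∈ stdSimplex ℝ (Fin N) ∧
    ∀ μ ∈ stdSimplex ℝ (Fin N), ∀ Q ∈ coupling (N := N) a b,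
      ell C P μ - ell C Q lam ≤ ε

/-- The defining properties of the Margins procedure output (a^k, b^k). -/
def MarginsProp {n N : ℕ} (P : Fin N → Mat n) (b : Fin n → ℝ)
    (ak bk : Fin N → Fin n → ℝ) : Prop :=
  (∀ k, ak k = rowSum (P k)) ∧
  (∀ k j, 0 ≤ bk k j) ∧
  (∀ j, ∑ k, bk k j = b j) ∧
  (∀ k, ∑ j, bk k j = ∑ i, ak k i) ∧
  (∀ j k k', 0 ≤ (bk k j - colSum (P k) j) * (bk k' j - colSum (P k') j))

/-- the rounding procedure produces a nonnegative matrix with the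
prescribed marginals, and its ℓ₁ distance to the input is controlled by the
marginal violations. -/
theorem round_properties
    {n : ℕ} (a b : Fin n → ℝ) (q : ℝ)
    (ha : ∀ i, 0 ≤ a i) (hb : ∀ j, 0 ≤ b j)
    (hsa : ∑ i, a i = q) (hsb : ∑ j, b j = q)
    (A : Mat n) (hA : ∀ i j, 0 < A i j) :
    (∀ i j, 0 ≤ roundMat A a b i j) ∧
    rowSum (roundMat A a b) = a ∧
    colSum (roundMat A a b) = b ∧
    mnorm1 (fun i j => roundMat A a b i j - A i j)
      ≤ 2 * (vnorm1 (fun i => rowSum A i - a i) + vnorm1 (fun j => colSum A j - b j)) := by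
  classical
  set r : Fin n → ℝ := rowSum A with hrdef
  have hrpos : ∀ i, 0 < r i := fun i =>
    Finset.sum_pos (fun j _ => hA i j) ⟨i, Finset.mem_univ i⟩
  set x : Fin n → ℝ := fun i => min (a i / r i) 1 with hxdef
  set A' : Mat n := fun i j => x i * A i j with hA'def
  set c' : Fin n → ℝ := colSum A' with hc'def
  set y : Fin n → ℝ := fun j => min (b j / c' j) 1 with hydef
  set B : Mat n := fun i j => A' i j * y j with hBdef
  set ea : Fin n → ℝ := fun i => a i - rowSum B i with headef
  set eb : Fin n → ℝ := fun j => b j - colSum B j with hebdef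
  have hround : ∀ i j, roundMat A a b i j
      = B i j + (if vnorm1 ea = 0 then 0 else ea i * eb j / vnorm1 ea) := fun i j => rfl
  have hx0 : ∀ i, 0 ≤ x i := fun i => le_min (div_nonneg (ha i) (hrpos i).le) zero_le_one
  have hx1 : ∀ i, x i ≤ 1 := fun i => min_le_right _ _
  have hrowA' : ∀ i, rowSum A' i = min (a i) (r i) := by
    intro i
    have h1 : rowSum A' i = x i * r i := by
      simp only [rowSum, hA'def, ← Finset.mul_sum]; rfl
    rw [h1, hxdef]
    show min (a i / r i) 1 * r i = min (a i) (r i)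
    rcases le_total (a i / r i) 1 with h | h
    · rw [min_eq_left h, div_mul_cancel₀ _ (hrpos i).ne',
        min_eq_left ((div_le_one (hrpos i)).mp h)]
    · rw [min_eq_right h, one_mul, min_eq_right ((one_le_div (hrpos i)).mp h)]
  have hA'nonneg : ∀ i j, 0 ≤ A' i j := fun i j => mul_nonneg (hx0 i) (hA i j).le
  have hA'le : ∀ i j, A' i j ≤ A i j := fun i j => by
    have := mul_le_of_le_one_left (hA i j).le (hx1 i); simpa [hA'def] using this
  have hc'0 : ∀ j, 0 ≤ c' j := fun j => Finset.sum_nonneg fun i _ => hA'nonneg i j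
  have hc'le : ∀ j, c' j ≤ colSum A j := fun j =>
    Finset.sum_le_sum fun i _ => hA'le i j
  have hy0 : ∀ j, 0 ≤ y j := by
    intro j
    rcases eq_or_lt_of_le (hc'0 j) with h | h
    · exact le_min (by rw [← h]; simp) zero_le_one
    · exact le_min (div_nonneg (hb j) h.le) zero_le_one
  have hy1 : ∀ j, y j ≤ 1 := fun j => min_le_right _ _
  have hcolB : ∀ j, colSum B j = min (b j) (c' j) := by
    intro j
    have h1 : colSum B j = c' j * y j := by
      simp only [colSum, hBdef, ← Finset.sum_mul]; rfl
    rcases eq_or_lt_of_le (hc'0 j) with h | h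
    · have hz : c' j = 0 := h.symm
      rw [h1, hz, zero_mul, min_eq_right (hz ▸ hb j)]
    · rw [h1, hydef]
      show c' j * min (b j / c' j) 1 = min (b j) (c' j)
      rcases le_total (b j / c' j) 1 with h2 | h2
      · rw [min_eq_left h2, mul_div_cancel₀ _ h.ne',
          min_eq_left ((div_le_one h).mp h2)]
      · rw [min_eq_right h2, mul_one, min_eq_right ((one_le_div h).mp h2)]
  have hBnonneg : ∀ i j, 0 ≤ B i j := fun i j => mul_nonneg (hA'nonneg i j) (hy0 j)
  have hBle : ∀ i j, B i j ≤ A i j := fun i j =>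
    le_trans (mul_le_of_le_one_right (hA'nonneg i j) (hy1 j)) (hA'le i j)
  have hrowBle : ∀ i, rowSum B i ≤ min (a i) (r i) := by
    intro i
    rw [← hrowA' i]
    exact Finset.sum_le_sum fun j _ => mul_le_of_le_one_right (hA'nonneg i j) (hy1 j)
  have hea0 : ∀ i, 0 ≤ ea i := fun i => by
    have := (hrowBle i).trans (min_le_left _ _)
    simp only [headef]; linarith
  have heb0 : ∀ j, 0 ≤ eb j := fun j => by
    have := (hcolB j) ▸ (min_le_left (b j) (c' j))
    simp only [hebdef]; linarith
  -- total masses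
  have hsum_comm : ∑ i, rowSum B i = ∑ j, colSum B j := by
    simp only [rowSum, colSum]
    rw [Finset.sum_comm]
  have hsea : ∑ i, ea i = q - ∑ i, rowSum B i := by
    simp only [headef, Finset.sum_sub_distrib, hsa]
  have hseb : ∑ j, eb j = q - ∑ i, rowSum B i := by
    simp only [hebdef, Finset.sum_sub_distrib, hsb, hsum_comm]
  set D : ℝ := vnorm1 ea with hDdef
  have hD : D = ∑ i, ea i := by
    simp only [hDdef, vnorm1]
    exact Finset.sum_congr rfl fun i _ => abs_of_nonneg (hea0 i)
  have hDeb : ∑ j, eb j = D := by rw [hD, hsea, hseb]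
  have hD0 : 0 ≤ D := by rw [hD]; exact Finset.sum_nonneg fun i _ => hea0 i
  have heaD : ∀ i, D = 0 → ea i = 0 := by
    intro i h
    have := (Finset.sum_eq_zero_iff_of_nonneg (fun i _ => hea0 i)).mp (hD ▸ h)
    exact this i (Finset.mem_univ i)
  have hebD : ∀ j, D = 0 → eb j = 0 := by
    intro j h
    have hz : ∑ j, eb j = 0 := by rw [hDeb, h]
    exact (Finset.sum_eq_zero_iff_of_nonneg (fun j _ => heb0 j)).mp hz j (Finset.mem_univ j)
  refine ⟨?_, ?_, ?_, ?_⟩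
  · intro i j
    rw [hround]
    split_ifs with h
    · simpa using hBnonneg i j
    · have hDpos : 0 < D := lt_of_le_of_ne hD0 (Ne.symm h)
      have : 0 ≤ ea i * eb j / D := div_nonneg (mul_nonneg (hea0 i) (heb0 j)) hD0
      linarith [hBnonneg i j]
  · funext i
    have : rowSum (roundMat A a b) i
        = rowSum B i + (if D = 0 then 0 else ea i * (∑ j, eb j) / D) := by
      simp only [rowSum, hround]
      rw [Finset.sum_add_distrib]
      congr 1
      split_ifs with h
      · simp
      · rw [← Finset.sum_div, ← Finset.mul_sum]
    rw [this]
    split_ifs with h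
    · have := heaD i h
      simp only [headef] at this; linarith
    · rw [hDeb, mul_div_assoc, div_self h, mul_one]
      simp only [headef]; ring
  · funext j
    have : colSum (roundMat A a b) j
        = colSum B j + (if D = 0 then 0 else (∑ i, ea i) * eb j / D) := by
      simp only [colSum, hround]
      rw [Finset.sum_add_distrib]
      congr 1
      split_ifs with h
      · simp
      · rw [← Finset.sum_div, ← Finset.sum_mul]
    rw [this]
    split_ifs with h
    · have := hebD j h
      simp only [hebdef] at this; linarith
    · have h1 : (∑ i, ea i) = D := hD.symm
      rw [h1, mul_comm, mul_div_assoc, div_self h, mul_one]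
      simp only [hebdef]; ring
  · -- the norm bound
    have ht0 : ∀ i j, 0 ≤ (if D = 0 then (0:ℝ) else ea i * eb j / D) := by
      intro i j; split_ifs with h
      · exact le_refl 0
      · exact div_nonneg (mul_nonneg (hea0 i) (heb0 j)) hD0
    have hS2 : (∑ i, ∑ j, (if D = 0 then (0:ℝ) else ea i * eb j / D)) ≤ D := by
      by_cases h : D = 0
      · simp [h]
      · simp only [if_neg h]
        have hinner : ∀ i, (∑ j, ea i * eb j / D) = ea i := by
          intro i
          rw [← Finset.sum_div, ← Finset.mul_sum, hDeb, mul_div_assoc, div_self h, mul_one]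
        rw [Finset.sum_congr rfl fun i _ => hinner i]
        exact le_of_eq hD.symm
    have hSA : (∑ i, ∑ j, A i j) = ∑ i, r i := rfl
    have hSB : (∑ i, ∑ j, B i j) = ∑ j, min (b j) (c' j) := by
      rw [Finset.sum_comm]
      exact Finset.sum_congr rfl fun j _ => hcolB j
    have hM1C : (∑ i, min (a i) (r i)) = ∑ j, c' j := by
      have h1 : (∑ i, ∑ j, A' i j) = ∑ i, min (a i) (r i) :=
        Finset.sum_congr rfl fun i _ => hrowA' i
      have h2 : (∑ i, ∑ j, A' i j) = ∑ j, c' j := by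
        rw [Finset.sum_comm]; rfl
      rw [← h1]; exact h2
    have hDval : D = q - ∑ j, min (b j) (c' j) := by
      rw [hD, hsea, show (∑ i, rowSum B i) = ∑ j, min (b j) (c' j) from hSB]
    have key1 : ∀ i, r i + a i - 2 * min (a i) (r i) = |r i - a i| := by
      intro i
      rcases le_total (a i) (r i) with h | h
      · rw [min_eq_left h, abs_of_nonneg (by linarith)]; ring
      · rw [min_eq_right h, abs_of_nonpos (by linarith)]; ring
    have key2 : ∀ j, c' j - min (b j) (c' j) ≤ |colSum A j - b j| := by
      intro j
      rcases le_total (b j) (c' j) with h | h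
      · rw [min_eq_left h]
        have h2 := hc'le j
        have h3 := le_abs_self (colSum A j - b j)
        linarith
      · rw [min_eq_right h]
        simp only [sub_self]
        exact abs_nonneg _
    have e1 : (∑ i, (r i + a i - 2 * min (a i) (r i))) = ∑ i, |r i - a i| :=
      Finset.sum_congr rfl fun i _ => key1 i
    have e1' : (∑ i, (r i + a i - 2 * min (a i) (r i)))
        = (∑ i, r i) + (∑ i, a i) - 2 * ∑ i, min (a i) (r i) := by
      simp only [Finset.sum_sub_distrib, Finset.sum_add_distrib, ← Finset.mul_sum]
    have e2 : (∑ j, (c' j - min (b j) (c' j))) ≤ ∑ j, |colSum A j - b j| :=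
      Finset.sum_le_sum fun j _ => key2 j
    have e2' : (∑ j, (c' j - min (b j) (c' j)))
        = (∑ j, c' j) - ∑ j, min (b j) (c' j) := by
      rw [← Finset.sum_sub_distrib]
    have hX : vnorm1 (fun i => r i - a i) = ∑ i, |r i - a i| := rfl
    have hY : vnorm1 (fun j => colSum A j - b j) = ∑ j, |colSum A j - b j| := rfl
    have hX0 : (0:ℝ) ≤ ∑ i, |r i - a i| :=
      Finset.sum_nonneg fun i _ => abs_nonneg _
    calc mnorm1 (fun i j => roundMat A a b i j - A i j)
        ≤ ∑ i, ∑ j, ((A i j - B i j) + (if D = 0 then (0:ℝ) else ea i * eb j / D)) := by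
          rw [mnorm1]
          apply Finset.sum_le_sum; intro i _
          apply Finset.sum_le_sum; intro j _
          show |roundMat A a b i j - A i j| ≤ _
          have hdiff : roundMat A a b i j - A i j
              = (if D = 0 then (0:ℝ) else ea i * eb j / D) - (A i j - B i j) := by
            rw [hround i j]; ring
          rw [hdiff]
          have h1 : 0 ≤ A i j - B i j := by linarith [hBle i j]
          have h2 := ht0 i j
          rw [abs_le]; constructor <;> linarith
      _ = ((∑ i, ∑ j, A i j) - (∑ i, ∑ j, B i j))
            + (∑ i, ∑ j, (if D = 0 then (0:ℝ) else ea i * eb j / D)) := by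
          simp only [Finset.sum_add_distrib, Finset.sum_sub_distrib]
      _ ≤ 2 * (vnorm1 (fun i => r i - a i) + vnorm1 (fun j => colSum A j - b j)) := by
          rw [hSA, hSB]
          linarith [hS2, hDval, hsa, hM1C, e1, e1', e2, e2', hX, hY, hX0]

end EOT

end
end

section
/- For any fixed f, g ∈ ℝ^n, the map λ ↦ F(f,g,λ) is concave on Δ^N, its gradient in λ is (c_∞²/η)-Lipschitz: for all λ¹, λ² ∈ Δ^N, ‖∇_λ F(f,g,λ¹) − ∇_λ F(f,g,λ²)‖_2 ≤ (c_∞²/η)‖λ¹ − λ²‖_2, and consequently F(f,g,λ¹) ≥ F(f,g,λ²) + ⟨∇_λ F(f,g,λ²), λ¹ − λ²⟩ − (c_∞²/(2η))‖λ¹ − λ²‖_2² for all λ¹, λ² ∈ Δ^N. -/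
/-!
Flattening the blocks into one index `m = (k, i, j)`, `F(f, g, ·)` is, up to an additive constant,
`-η` times the log-sum-exp of the affine function `λ ↦ (f_i + g_j - λ_k C^k_{ij}) / η`. Along a
line `λ + t d`, the derivative of `⟨v, ∇_λ F⟩` is `-η⁻¹ Cov_π(V, D)`, where `π` is the softmax
distribution and `V_m = v_k C^k_{ij}`, `D_m = d_k C^k_{ij}`. Since `Cov_π(D, D) ≥ 0`, `F` is concave;
since `|Cov_π(V, D)|² ≤ E_π V² · E_π D² ≤ c_∞⁴ ‖v‖² ‖d‖²`, the mean value theorem applied to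
`⟨∇F(λ¹) - ∇F(λ²), ∇F(λ² + t (λ¹ - λ²))⟩` gives the Lipschitz bound, and the second derivative of
`F` along the segment from `λ²` to `λ¹` is at least `-c_∞² ‖λ¹ - λ²‖² / η`, which gives the
quadratic lower bound.
-/

open scoped BigOperators

noncomputable section

open Finset Real Set

section Softmax

variable {ι : Type*} [Fintype ι]

def softmax (s : ι → ℝ) (m : ι) : ℝ := exp (s m) / ∑ m', exp (s m')

def weightedCov (p u v : ι → ℝ) : ℝ :=
  ∑ m, p m * (u m * v m) - (∑ m, p m * u m) * ∑ m, p m * v m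

lemma softmax_nonneg (s : ι → ℝ) (m : ι) : 0 ≤ softmax s m := by
  unfold softmax; positivity

lemma sum_softmax [Nonempty ι] (s : ι → ℝ) : ∑ m, softmax s m = 1 := by
  simp only [softmax, ← sum_div]
  exact div_self (sum_pos (fun m _ => exp_pos (s m)) univ_nonempty).ne'

lemma weightedCov_mul_right (p u v : ι → ℝ) (r : ℝ) :
    weightedCov p u (fun m => r * v m) = r * weightedCov p u v := by
  have h₁ : ∑ m, p m * (u m * (r * v m)) = r * ∑ m, p m * (u m * v m) := by
    rw [mul_sum]; exact sum_congr rfl fun m _ => by ring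
  have h₂ : ∑ m, p m * (r * v m) = r * ∑ m, p m * v m := by
    rw [mul_sum]; exact sum_congr rfl fun m _ => by ring
  rw [weightedCov, weightedCov, h₁, h₂]
  ring

lemma weightedCov_self_le (p v : ι → ℝ) : weightedCov p v v ≤ ∑ m, p m * v m ^ 2 := by
  simp only [weightedCov, ← sq]
  linarith [sq_nonneg (∑ m, p m * v m)]

variable {p : ι → ℝ}

lemma weightedCov_self_eq (hp1 : ∑ m, p m = 1) (v : ι → ℝ) :
    weightedCov p v v = ∑ m, p m * (v m - ∑ m', p m' * v m') ^ 2 := by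
  set v₀ := ∑ m', p m' * v m'
  have hexp : ∀ m,
      p m * (v m - v₀) ^ 2 = p m * (v m * v m) - 2 * v₀ * (p m * v m) + v₀ ^ 2 * p m :=
    fun m => by ring
  simp only [weightedCov, hexp, sum_add_distrib, sum_sub_distrib, ← mul_sum, hp1]
  ring

lemma weightedCov_self_nonneg (hp0 : ∀ m, 0 ≤ p m) (hp1 : ∑ m, p m = 1) (v : ι → ℝ) :
    0 ≤ weightedCov p v v := by
  rw [weightedCov_self_eq hp1]
  exact sum_nonneg fun m _ => mul_nonneg (hp0 m) (sq_nonneg _)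

lemma sq_weightedCov_le (hp0 : ∀ m, 0 ≤ p m) (hp1 : ∑ m, p m = 1) (u v : ι → ℝ) :
    weightedCov p u v ^ 2 ≤ (∑ m, p m * u m ^ 2) * ∑ m, p m * v m ^ 2 := by
  set v₀ := ∑ m', p m' * v m'
  have hcentred : weightedCov p u v = ∑ m, p m * u m * (v m - v₀) := by
    rw [weightedCov]
    simp only [mul_sub, sum_sub_distrib, ← sum_mul]
    simp only [mul_assoc]
    rfl
  have hCS : weightedCov p u v ^ 2 ≤ (∑ m, p m * u m ^ 2) * ∑ m, p m * (v m - v₀) ^ 2 := by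
    rw [hcentred]
    exact sum_sq_le_sum_mul_sum_of_sq_le_mul _
      (fun m _ => mul_nonneg (hp0 m) (sq_nonneg _)) (fun m _ => mul_nonneg (hp0 m) (sq_nonneg _))
      (fun m _ => le_of_eq (by ring))
  rw [← weightedCov_self_eq hp1] at hCS
  exact hCS.trans (mul_le_mul_of_nonneg_left (weightedCov_self_le p v)
    (sum_nonneg fun m _ => mul_nonneg (hp0 m) (sq_nonneg _)))

lemma hasDerivAt_sum_exp_mul_line (c x u : ι → ℝ) (t : ℝ) :
    HasDerivAt (fun t => ∑ m, exp (c m + t * x m) * u m)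
      (∑ m, exp (c m + t * x m) * (x m * u m)) t := by
  refine HasDerivAt.fun_sum fun m _ => ?_
  have h := ((((hasDerivAt_id' t).mul_const (x m)).const_add (c m)).exp).mul_const (u m)
  exact h.congr_deriv (by ring)

lemma sum_softmax_mul (s u : ι → ℝ) :
    ∑ m, softmax s m * u m = (∑ m, exp (s m) * u m) / ∑ m, exp (s m) := by
  simp only [softmax, div_mul_eq_mul_div, ← sum_div]

lemma hasDerivAt_log_sum_exp_line [Nonempty ι] (c x : ι → ℝ) (t : ℝ) :
    HasDerivAt (fun t => log (∑ m, exp (c m + t * x m)))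
      (∑ m, softmax (fun m => c m + t * x m) m * x m) t := by
  have hW := hasDerivAt_sum_exp_mul_line c x (fun _ => 1) t
  simp only [mul_one] at hW
  rw [sum_softmax_mul]
  exact hW.log (sum_pos (fun m _ => exp_pos (c m + t * x m)) univ_nonempty).ne'

lemma hasDerivAt_sum_softmax_mul_line [Nonempty ι] (c x u : ι → ℝ) (t : ℝ) :
    HasDerivAt (fun t => ∑ m, softmax (fun m => c m + t * x m) m * u m)
      (weightedCov (softmax (fun m => c m + t * x m)) u x) t := by
  have hW := hasDerivAt_sum_exp_mul_line c x (fun _ => 1) t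
  simp only [mul_one] at hW
  have hpos : 0 < ∑ m, exp (c m + t * x m) := sum_pos (fun m _ => exp_pos _) univ_nonempty
  simp only [sum_softmax_mul, weightedCov]
  refine ((hasDerivAt_sum_exp_mul_line c x u t).fun_div hW hpos.ne').congr_deriv ?_
  field_simp

end Softmax

lemma concaveOn_univ_of_forall_line {E : Type*} [AddCommGroup E] [Module ℝ E] {F : E → ℝ}
    (h : ∀ x d : E, ConcaveOn ℝ univ fun t : ℝ => F (x + t • d)) : ConcaveOn ℝ univ F := by
  refine ⟨convex_univ, fun x _ y _ a b ha hb hab => ?_⟩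
  have hline := (h x (y - x)).2 (mem_univ 0) (mem_univ 1) ha hb hab
  have hpt : x + b • (y - x) = a • x + b • y := by
    obtain rfl : a = 1 - b := by linarith
    module
  simpa [hpt] using hline

lemma add_deriv_sub_half_le_of_hasDerivAt2 {φ φ' φ'' : ℝ → ℝ} {K : ℝ}
    (hφ : ∀ t, HasDerivAt φ (φ' t) t) (hφ' : ∀ t, HasDerivAt φ' (φ'' t) t)
    (hK : ∀ t, -K ≤ φ'' t) : φ 0 + φ' 0 - K / 2 ≤ φ 1 := by
  have hψ : ∀ t, HasDerivAt (fun t => φ t + K / 2 * t ^ 2) (φ' t + K * t) t := fun t =>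
    ((hφ t).add (((hasDerivAt_id' t).pow 2).const_mul (K / 2))).congr_deriv (by ring)
  have hψ' : ∀ t, HasDerivAt (fun t => φ' t + K * t) (φ'' t + K) t := fun t =>
    ((hφ' t).add ((hasDerivAt_id' t).const_mul K)).congr_deriv (by ring)
  have hconvex : ConvexOn ℝ univ fun t => φ t + K / 2 * t ^ 2 :=
    convexOn_of_hasDerivWithinAt2_nonneg convex_univ
      (fun t _ => (hψ t).continuousAt.continuousWithinAt)
      (fun t _ => (hψ t).hasDerivWithinAt) (fun t _ => (hψ' t).hasDerivWithinAt)
      (fun t _ => by linarith [hK t])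
  have := hconvex.le_slope_of_hasDerivAt (mem_univ 0) (mem_univ 1) zero_lt_one (hψ 0)
  simp only [slope_def_field] at this
  norm_num at this
  linarith

namespace EOT

variable {n N : ℕ}

/-- `ζ^k(f,g,λ)_{ij} = exp (logZeta η C f g λ (k, i, j))`. -/
def logZeta (η : ℝ) (C : Fin N → Mat n) (f g : Fin n → ℝ) (lam : Fin N → ℝ) :
    Fin N × Fin n × Fin n → ℝ :=
  fun m => (f m.2.1 + g m.2.2 - lam m.1 * C m.1 m.2.1 m.2.2) / η

def costAlong (C : Fin N → Mat n) (v : Fin N → ℝ) : Fin N × Fin n × Fin n → ℝ :=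
  fun m => v m.1 * C m.1 m.2.1 m.2.2

lemma vnorm2_nonneg {m : ℕ} (v : Fin m → ℝ) : 0 ≤ vnorm2 v := sqrt_nonneg _

lemma vnorm2_sq {m : ℕ} (v : Fin m → ℝ) : vnorm2 v ^ 2 = ∑ i, v i ^ 2 :=
  sq_sqrt (sum_nonneg fun _ _ => sq_nonneg _)

lemma abs_le_cinf (C : Fin N → Mat n) (k : Fin N) (i j : Fin n) : |C k i j| ≤ cinf C :=
  le_ciSup_of_le (Finite.bddAbove_range _) k <| le_ciSup_of_le (Finite.bddAbove_range _) i <|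
    le_ciSup (f := fun j => |C k i j|) (Finite.bddAbove_range _) j

lemma costAlong_sq_le (C : Fin N → Mat n) (v : Fin N → ℝ) (m : Fin N × Fin n × Fin n) :
    costAlong C v m ^ 2 ≤ (cinf C * vnorm2 v) ^ 2 := by
  have hv : v m.1 ^ 2 ≤ vnorm2 v ^ 2 := by
    rw [vnorm2_sq]
    exact single_le_sum (f := fun k => v k ^ 2) (fun k _ => sq_nonneg _) (mem_univ _)
  have hC : C m.1 m.2.1 m.2.2 ^ 2 ≤ cinf C ^ 2 := by
    rw [← sq_abs]
    exact pow_le_pow_left₀ (abs_nonneg _) (abs_le_cinf C _ _ _) 2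
  rw [costAlong, mul_pow, mul_pow, mul_comm]
  exact mul_le_mul hC hv (sq_nonneg _) (sq_nonneg _)

section Distribution

variable {p : Fin N × Fin n × Fin n → ℝ} (hp0 : ∀ m, 0 ≤ p m) (hp1 : ∑ m, p m = 1)
include hp0 hp1

lemma sum_mul_costAlong_sq_le (C : Fin N → Mat n) (v : Fin N → ℝ) :
    ∑ m, p m * costAlong C v m ^ 2 ≤ (cinf C * vnorm2 v) ^ 2 :=
  calc ∑ m, p m * costAlong C v m ^ 2 ≤ ∑ m, p m * (cinf C * vnorm2 v) ^ 2 :=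
        sum_le_sum fun m _ => mul_le_mul_of_nonneg_left (costAlong_sq_le C v m) (hp0 m)
    _ = (cinf C * vnorm2 v) ^ 2 := by rw [← sum_mul, hp1, one_mul]

lemma abs_weightedCov_costAlong_le (C : Fin N → Mat n) (v d : Fin N → ℝ) :
    |weightedCov p (costAlong C v) (costAlong C d)| ≤ cinf C ^ 2 * vnorm2 v * vnorm2 d := by
  refine abs_le_of_sq_le_sq ?_ ?_
  · calc weightedCov p (costAlong C v) (costAlong C d) ^ 2
        ≤ (∑ m, p m * costAlong C v m ^ 2) * ∑ m, p m * costAlong C d m ^ 2 :=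
          sq_weightedCov_le hp0 hp1 _ _
      _ ≤ (cinf C * vnorm2 v) ^ 2 * (cinf C * vnorm2 d) ^ 2 :=
          mul_le_mul (sum_mul_costAlong_sq_le hp0 hp1 C v) (sum_mul_costAlong_sq_le hp0 hp1 C d)
            (sum_nonneg fun m _ => mul_nonneg (hp0 m) (sq_nonneg _)) (sq_nonneg _)
      _ = (cinf C ^ 2 * vnorm2 v * vnorm2 d) ^ 2 := by ring
  · exact mul_nonneg (mul_nonneg (sq_nonneg _) (vnorm2_nonneg v)) (vnorm2_nonneg d)

end Distribution

variable {η : ℝ} {C : Fin N → Mat n} {a b f g : Fin n → ℝ}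

lemma sum_mnorm1_zeta (lam : Fin N → ℝ) :
    ∑ k, mnorm1 (zeta η C f g lam k) = ∑ m, exp (logZeta η C f g lam m) := by
  simp only [mnorm1, Fintype.sum_prod_type, zeta, logZeta, abs_of_pos (exp_pos _)]

lemma Fdual_eq_log_sum_exp (lam : Fin N → ℝ) :
    Fdual η C a b f g lam = (∑ i, f i * a i) + (∑ j, g j * b j)
      - η * log (∑ m, exp (logZeta η C f g lam m)) - η := by
  rw [Fdual, sum_mnorm1_zeta]

lemma sum_mul_gradLam (lam v : Fin N → ℝ) :
    ∑ k, v k * gradLam η C f g lam k =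
      ∑ m, softmax (logZeta η C f g lam) m * costAlong C v m := by
  simp only [gradLam, frob, piMat, sum_mnorm1_zeta, Fintype.sum_prod_type, mul_sum, softmax,
    costAlong]
  refine sum_congr rfl fun k _ => sum_congr rfl fun i _ => sum_congr rfl fun j _ => ?_
  simp only [zeta, logZeta]
  ring

lemma logZeta_line (μ d : Fin N → ℝ) (t : ℝ) :
    logZeta η C f g (μ + t • d) =
      fun m => logZeta η C f g μ m + t * (-η⁻¹ * costAlong C d m) := by
  funext m
  simp only [logZeta, costAlong, Pi.add_apply, Pi.smul_apply, smul_eq_mul]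
  ring

variable [NeZero n] [NeZero N]

lemma hasDerivAt_Fdual_line (hη : η ≠ 0) (μ d : Fin N → ℝ) (t : ℝ) :
    HasDerivAt (fun t => Fdual η C a b f g (μ + t • d))
      (∑ k, d k * gradLam η C f g (μ + t • d) k) t := by
  have h := hasDerivAt_log_sum_exp_line (logZeta η C f g μ) (fun m => -η⁻¹ * costAlong C d m) t
  simp only [Fdual_eq_log_sum_exp, sum_mul_gradLam, logZeta_line]
  refine (((h.const_mul η).const_sub _).sub_const η).congr_deriv ?_
  rw [mul_sum, ← sum_neg_distrib]
  refine sum_congr rfl fun m _ => ?_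
  field_simp

lemma hasDerivAt_sum_mul_gradLam_line (μ d v : Fin N → ℝ) (t : ℝ) :
    HasDerivAt (fun t => ∑ k, v k * gradLam η C f g (μ + t • d) k)
      (-η⁻¹ * weightedCov (softmax (logZeta η C f g (μ + t • d))) (costAlong C v)
        (costAlong C d)) t := by
  simp only [sum_mul_gradLam, logZeta_line]
  rw [← weightedCov_mul_right]
  exact hasDerivAt_sum_softmax_mul_line _ _ _ t

theorem concaveOn_Fdual (hη : 0 < η) : ConcaveOn ℝ univ (Fdual η C a b f g) := by
  refine concaveOn_univ_of_forall_line fun μ d => ?_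
  refine concaveOn_of_hasDerivWithinAt2_nonpos convex_univ
    (fun t _ => (hasDerivAt_Fdual_line hη.ne' μ d t).continuousAt.continuousWithinAt)
    (fun t _ => (hasDerivAt_Fdual_line hη.ne' μ d t).hasDerivWithinAt)
    (fun t _ => (hasDerivAt_sum_mul_gradLam_line μ d d t).hasDerivWithinAt)
    fun t _ => ?_
  have hvar := weightedCov_self_nonneg (softmax_nonneg (logZeta η C f g (μ + t • d)))
    (sum_softmax _) (costAlong C d)
  exact mul_nonpos_of_nonpos_of_nonneg (neg_nonpos.2 (inv_nonneg.2 hη.le)) hvar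

theorem vnorm2_gradLam_sub_le (hη : 0 < η) (lam₁ lam₂ : Fin N → ℝ) :
    vnorm2 (fun k => gradLam η C f g lam₁ k - gradLam η C f g lam₂ k)
      ≤ cinf C ^ 2 / η * vnorm2 (fun k => lam₁ k - lam₂ k) := by
  set v := fun k => gradLam η C f g lam₁ k - gradLam η C f g lam₂ k
  set d : Fin N → ℝ := fun k => lam₁ k - lam₂ k
  have hend : lam₂ + (1 : ℝ) • d = lam₁ := by funext k; simp [d]
  obtain ⟨t, -, hslope⟩ := exists_hasDerivAt_eq_slope
    (fun t => ∑ k, v k * gradLam η C f g (lam₂ + t • d) k) _ zero_lt_one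
    (fun t _ => (hasDerivAt_sum_mul_gradLam_line lam₂ d v t).continuousAt.continuousWithinAt)
    fun t _ => hasDerivAt_sum_mul_gradLam_line lam₂ d v t
  simp only [hend, zero_smul, add_zero, sub_zero, div_one] at hslope
  have hincrement : ∑ k, v k * gradLam η C f g lam₁ k - ∑ k, v k * gradLam η C f g lam₂ k
      = vnorm2 v ^ 2 := by
    rw [vnorm2_sq, ← sum_sub_distrib]
    exact sum_congr rfl fun k _ => by simp only [v]; ring
  have hcov := abs_weightedCov_costAlong_le (softmax_nonneg (logZeta η C f g (lam₂ + t • d)))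
    (sum_softmax _) C v d
  have hsq : vnorm2 v ^ 2 ≤ cinf C ^ 2 / η * vnorm2 v * vnorm2 d :=
    calc vnorm2 v ^ 2
        = -η⁻¹ * weightedCov (softmax (logZeta η C f g (lam₂ + t • d))) (costAlong C v)
          (costAlong C d) := by rw [← hincrement, hslope]
      _ ≤ |-η⁻¹ * weightedCov (softmax (logZeta η C f g (lam₂ + t • d))) (costAlong C v)
          (costAlong C d)| := le_abs_self _
      _ = η⁻¹ * |weightedCov (softmax (logZeta η C f g (lam₂ + t • d))) (costAlong C v)
          (costAlong C d)| := by rw [abs_mul, abs_neg, abs_of_pos (inv_pos.2 hη)]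
      _ ≤ η⁻¹ * (cinf C ^ 2 * vnorm2 v * vnorm2 d) :=
          mul_le_mul_of_nonneg_left hcov (inv_nonneg.2 hη.le)
      _ = cinf C ^ 2 / η * vnorm2 v * vnorm2 d := by ring
  rcases (vnorm2_nonneg v).eq_or_lt with hv | hv
  · rw [← hv]
    exact mul_nonneg (by positivity) (vnorm2_nonneg d)
  · exact le_of_mul_le_mul_left (by linarith) hv

theorem Fdual_quadratic_lower_bound (hη : 0 < η) (lam₁ lam₂ : Fin N → ℝ) :
    Fdual η C a b f g lam₂ + (∑ k, gradLam η C f g lam₂ k * (lam₁ k - lam₂ k))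
        - cinf C ^ 2 / (2 * η) * vnorm2 (fun k => lam₁ k - lam₂ k) ^ 2
      ≤ Fdual η C a b f g lam₁ := by
  set d : Fin N → ℝ := fun k => lam₁ k - lam₂ k
  have hend : lam₂ + (1 : ℝ) • d = lam₁ := by funext k; simp [d]
  have hcurv : ∀ t : ℝ, -(cinf C ^ 2 / η * vnorm2 d ^ 2) ≤
      -η⁻¹ * weightedCov (softmax (logZeta η C f g (lam₂ + t • d))) (costAlong C d)
        (costAlong C d) := fun t => by
    have hvar := (weightedCov_self_le _ _).trans
      (sum_mul_costAlong_sq_le (softmax_nonneg (logZeta η C f g (lam₂ + t • d)))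
        (sum_softmax _) C d)
    calc -(cinf C ^ 2 / η * vnorm2 d ^ 2) = -η⁻¹ * (cinf C * vnorm2 d) ^ 2 := by ring
      _ ≤ _ := mul_le_mul_of_nonpos_left hvar (neg_nonpos.2 (inv_nonneg.2 hη.le))
  have h := add_deriv_sub_half_le_of_hasDerivAt2
    (hasDerivAt_Fdual_line (a := a) (b := b) hη.ne' lam₂ d)
    (hasDerivAt_sum_mul_gradLam_line lam₂ d d) hcurv
  simp only [hend, zero_smul, add_zero] at h
  have hsum : ∑ k, gradLam η C f g lam₂ k * (lam₁ k - lam₂ k) =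
      ∑ k, d k * gradLam η C f g lam₂ k :=
    sum_congr rfl fun k _ => mul_comm _ _
  have hK : cinf C ^ 2 / (2 * η) * vnorm2 d ^ 2 = cinf C ^ 2 / η * vnorm2 d ^ 2 / 2 := by ring
  rw [hsum, hK]
  exact h

theorem Fdual_lambda_concave_lipschitz_general
    {n N : ℕ} (hn : 0 < n) (hN : 0 < N)
    (C : Fin N → Mat n) (a b : Fin n → ℝ)
    (η : ℝ) (hη : 0 < η)
    (f g : Fin n → ℝ) :
    ConcaveOn ℝ (stdSimplex ℝ (Fin N)) (fun lam => Fdual η C a b f g lam) ∧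
    (∀ lam₁ ∈ stdSimplex ℝ (Fin N), ∀ lam₂ ∈ stdSimplex ℝ (Fin N),
      vnorm2 (fun k => gradLam η C f g lam₁ k - gradLam η C f g lam₂ k)
        ≤ cinf C ^ 2 / η * vnorm2 (fun k => lam₁ k - lam₂ k)) ∧
    (∀ lam₁ ∈ stdSimplex ℝ (Fin N), ∀ lam₂ ∈ stdSimplex ℝ (Fin N),
      Fdual η C a b f g lam₂ + (∑ k, gradLam η C f g lam₂ k * (lam₁ k - lam₂ k))
          - cinf C ^ 2 / (2 * η) * vnorm2 (fun k => lam₁ k - lam₂ k) ^ 2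
        ≤ Fdual η C a b f g lam₁) := by
  have : NeZero n := NeZero.of_pos hn
  have : NeZero N := NeZero.of_pos hN
  exact ⟨(concaveOn_Fdual hη).subset (subset_univ _) (convex_stdSimplex ℝ _),
    fun lam₁ _ lam₂ _ => vnorm2_gradLam_sub_le hη lam₁ lam₂,
    fun lam₁ _ lam₂ _ => Fdual_quadratic_lower_bound hη lam₁ lam₂⟩

/-- λ ↦ F(f,g,λ) is concave on Δ^N, its gradient is
(c_∞²/η)-Lipschitz on Δ^N, and the corresponding quadratic lower bound holds. -/
theorem Fdual_lambda_concave_lipschitz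
    {n N : ℕ} (hn : 0 < n) (hN : 0 < N)
    (C : Fin N → Mat n) (a b : Fin n → ℝ)
    (ha : a ∈ stdSimplex ℝ (Fin n)) (hb : b ∈ stdSimplex ℝ (Fin n))
    (hb' : ∀ j, 0 < b j)
    (η : ℝ) (hη : 0 < η)
    (f g : Fin n → ℝ) :
    ConcaveOn ℝ (stdSimplex ℝ (Fin N)) (fun lam => Fdual η C a b f g lam) ∧
    (∀ lam₁ ∈ stdSimplex ℝ (Fin N), ∀ lam₂ ∈ stdSimplex ℝ (Fin N),
      vnorm2 (fun k => gradLam η C f g lam₁ k - gradLam η C f g lam₂ k)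
        ≤ cinf C ^ 2 / η * vnorm2 (fun k => lam₁ k - lam₂ k)) ∧
    (∀ lam₁ ∈ stdSimplex ℝ (Fin N), ∀ lam₂ ∈ stdSimplex ℝ (Fin N),
      Fdual η C a b f g lam₂ + (∑ k, gradLam η C f g lam₂ k * (lam₁ k - lam₂ k))
          - cinf C ^ 2 / (2 * η) * vnorm2 (fun k => lam₁ k - lam₂ k) ^ 2
        ≤ Fdual η C a b f g lam₁) :=
  Fdual_lambda_concave_lipschitz_general hn hN C a b η hη f g

end EOT

end
end

section
/- For any f, g ∈ ℝ^n and λ ∈ Δ^N, the closed-form updates f⁺ := f + η log(a ./ r(Σ_{k=1}^N ζ^k(f,g,λ))) and g⁺ := g + η log(b ./ c(Σ_{k=1}^N ζ^k(f,g,λ))) (entrywise division and logarithm) satisfy: (a) r(Σ_k ζ^k(f⁺,g,λ)) = a, hence Σ_k ‖ζ^k(f⁺,g,λ)‖_1 = 1 and ∇_f F(f⁺,g,λ) = 0, so f⁺ maximizes f' ↦ F(f',g,λ) over ℝ^n; (b) c(Σ_k ζ^k(f,g⁺,λ)) = b, hence Σ_k ‖ζ^k(f,g⁺,λ)‖_1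 = 1 and ∇_g F(f,g⁺,λ) = 0, so g⁺ maximizes g' ↦ F(f,g',λ) over ℝ^n. -/
open scoped BigOperators

noncomputable section

namespace EOT

lemma jensen_log {n : ℕ} (a u : Fin n → ℝ) (ha0 : ∀ i, 0 ≤ a i)
    (ha1 : ∑ i, a i = 1) :
    ∑ i, a i * u i ≤ Real.log (∑ i, a i * Real.exp (u i)) := by
  have h := convexOn_exp.map_sum_le (t := Finset.univ) (w := a) (p := u)
    (fun i _ => ha0 i) ha1 (fun i _ => Set.mem_univ _)
  simp only [smul_eq_mul] at h
  have hpos : 0 < ∑ i, a i * Real.exp (u i) := lt_of_lt_of_le (Real.exp_pos _) h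
  rw [Real.le_log_iff_exp_le hpos]
  exact h


lemma sum_mnorm1 {n N : ℕ} (η : ℝ) (C : Fin N → Mat n) (f g : Fin n → ℝ)
    (lam : Fin N → ℝ) :
    ∑ k, mnorm1 (zeta η C f g lam k) = ∑ i, ∑ j, ∑ k, zeta η C f g lam k i j := by
  have habs : ∀ k i j, |zeta η C f g lam k i j| = zeta η C f g lam k i j :=
    fun k i j => abs_of_pos (Real.exp_pos _)
  simp only [mnorm1, habs]
  rw [Finset.sum_comm]
  exact Finset.sum_congr rfl fun i _ => Finset.sum_comm

/-- The f-block statement. -/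
lemma fblock
    {n N : ℕ} (hn : 0 < n) (hN : 0 < N)
    (C : Fin N → Mat n) (a b : Fin n → ℝ)
    (ha : a ∈ stdSimplex ℝ (Fin n))
    (ha' : ∀ i, 0 < a i)
    (η : ℝ) (hη : 0 < η)
    (f g : Fin n → ℝ) (lam : Fin N → ℝ)
    (fplus : Fin n → ℝ)
    (hfplus : fplus = fun i =>
      f i + η * Real.log (a i / rowSum (∑ k, zeta η C f g lam k) i)) :
    (rowSum (∑ k, zeta η C fplus g lam k) = a ∧
      (∑ k, mnorm1 (zeta η C fplus g lam k)) = 1 ∧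
      (∀ i, a i - rowSum (∑ k, piMat η C fplus g lam k) i = 0) ∧
      (∀ f' : Fin n → ℝ, Fdual η C a b f' g lam ≤ Fdual η C a b fplus g lam)) := by
  haveI : Nonempty (Fin n) := ⟨⟨0, hn⟩⟩
  haveI : Nonempty (Fin N) := ⟨⟨0, hN⟩⟩
  set R : Fin n → ℝ := fun i => ∑ j, ∑ k, zeta η C f g lam k i j with hRdef
  have hrs : ∀ i, rowSum (∑ k, zeta η C f g lam k) i = R i := by
    intro i; simp only [hRdef, rowSum, Finset.sum_apply]
  have hR : ∀ i, 0 < R i := by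
    intro i
    exact Finset.sum_pos (fun j _ => Finset.sum_pos
      (fun k _ => Real.exp_pos _) Finset.univ_nonempty) Finset.univ_nonempty
  have hzf : ∀ k i j, zeta η C fplus g lam k i j
      = a i / R i * zeta η C f g lam k i j := by
    intro k i j
    simp only [hfplus, zeta, hrs]
    rw [show (f i + η * Real.log (a i / R i) + g j - lam k * C k i j) / η
        = Real.log (a i / R i) + (f i + g j - lam k * C k i j) / η by
      field_simp; ring]
    rw [Real.exp_add, Real.exp_log (div_pos (ha' i) (hR i))]
  have hrow : ∀ i, ∑ j, ∑ k, zeta η C fplus g lam k i j = a i := by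
    intro i
    simp only [hzf, ← Finset.mul_sum]
    exact div_mul_cancel₀ (a i) (hR i).ne'
  have goal1 : rowSum (∑ k, zeta η C fplus g lam k) = a := by
    funext i
    have : rowSum (∑ k, zeta η C fplus g lam k) i
        = ∑ j, ∑ k, zeta η C fplus g lam k i j := by
      simp [rowSum, Finset.sum_apply]
    rw [this, hrow]
  have goal2 : (∑ k, mnorm1 (zeta η C fplus g lam k)) = 1 := by
    rw [sum_mnorm1]
    calc ∑ i, ∑ j, ∑ k, zeta η C fplus g lam k i j = ∑ i, a i :=
          Finset.sum_congr rfl fun i _ => hrow i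
      _ = 1 := ha.2
  refine ⟨goal1, goal2, ?_, ?_⟩
  · intro i
    have : rowSum (∑ k, piMat η C fplus g lam k) i = a i := by
      have : rowSum (∑ k, piMat η C fplus g lam k) i
          = ∑ j, ∑ k, piMat η C fplus g lam k i j := by
        simp [rowSum, Finset.sum_apply]
      rw [this]
      simp only [piMat, goal2, div_one]
      exact hrow i
    rw [this, sub_self]
  · intro f'
    have hsplit : ∀ k i j, zeta η C f' g lam k i j
        = Real.exp ((f' i - fplus i) / η) * zeta η C fplus g lam k i j := by
      intro k i j
      simp only [zeta]
      rw [← Real.exp_add]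
      congr 1
      field_simp
      ring
    have hS : ∑ k, mnorm1 (zeta η C f' g lam k)
        = ∑ i, a i * Real.exp ((f' i - fplus i) / η) := by
      rw [sum_mnorm1]
      refine Finset.sum_congr rfl fun i _ => ?_
      simp only [hsplit, ← Finset.mul_sum]
      rw [hrow i, mul_comm]
    have hjen := jensen_log a (fun i => (f' i - fplus i) / η) ha.1 ha.2
    rw [← hS] at hjen
    have h2 : (∑ i, f' i * a i) - (∑ i, fplus i * a i)
        ≤ η * Real.log (∑ k, mnorm1 (zeta η C f' g lam k)) := by
      have h3 := mul_le_mul_of_nonneg_left hjen hη.le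
      calc (∑ i, f' i * a i) - (∑ i, fplus i * a i)
          = η * ∑ i, a i * ((f' i - fplus i) / η) := by
            rw [Finset.mul_sum, ← Finset.sum_sub_distrib]
            refine Finset.sum_congr rfl fun i _ => ?_
            field_simp
        _ ≤ _ := h3
    simp only [Fdual, goal2, Real.log_one, mul_zero]
    linarith

lemma sum_mnorm1_col {n N : ℕ} (η : ℝ) (C : Fin N → Mat n) (f g : Fin n → ℝ)
    (lam : Fin N → ℝ) :
    ∑ k, mnorm1 (zeta η C f g lam k) = ∑ j, ∑ i, ∑ k, zeta η C f g lam k i j := by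
  have habs : ∀ k i j, |zeta η C f g lam k i j| = zeta η C f g lam k i j :=
    fun k i j => abs_of_pos (Real.exp_pos _)
  simp only [mnorm1, habs]
  calc ∑ k, ∑ i, ∑ j, zeta η C f g lam k i j
      = ∑ i, ∑ k, ∑ j, zeta η C f g lam k i j := Finset.sum_comm
    _ = ∑ i, ∑ j, ∑ k, zeta η C f g lam k i j :=
        Finset.sum_congr rfl fun i _ => Finset.sum_comm
    _ = ∑ j, ∑ i, ∑ k, zeta η C f g lam k i j := Finset.sum_comm

lemma gblock
    {n N : ℕ} (hn : 0 < n) (hN : 0 < N)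
    (C : Fin N → Mat n) (a b : Fin n → ℝ)
    (hb : b ∈ stdSimplex ℝ (Fin n))
    (hb' : ∀ j, 0 < b j)
    (η : ℝ) (hη : 0 < η)
    (f g : Fin n → ℝ) (lam : Fin N → ℝ)
    (gplus : Fin n → ℝ)
    (hgplus : gplus = fun j =>
      g j + η * Real.log (b j / colSum (∑ k, zeta η C f g lam k) j)) :
    (colSum (∑ k, zeta η C f gplus lam k) = b ∧
      (∑ k, mnorm1 (zeta η C f gplus lam k)) = 1 ∧
      (∀ j, b j - colSum (∑ k, piMat η C f gplus lam k) j = 0) ∧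
      (∀ g' : Fin n → ℝ, Fdual η C a b f g' lam ≤ Fdual η C a b f gplus lam)) := by
  haveI : Nonempty (Fin n) := ⟨⟨0, hn⟩⟩
  haveI : Nonempty (Fin N) := ⟨⟨0, hN⟩⟩
  set R : Fin n → ℝ := fun j => ∑ i, ∑ k, zeta η C f g lam k i j with hRdef
  have hrs : ∀ j, colSum (∑ k, zeta η C f g lam k) j = R j := by
    intro j; simp only [hRdef, colSum, Finset.sum_apply]
  have hR : ∀ j, 0 < R j := by
    intro j
    exact Finset.sum_pos (fun i _ => Finset.sum_pos
      (fun k _ => Real.exp_pos _) Finset.univ_nonempty) Finset.univ_nonempty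
  have hzf : ∀ k i j, zeta η C f gplus lam k i j
      = b j / R j * zeta η C f g lam k i j := by
    intro k i j
    simp only [hgplus, zeta, hrs]
    rw [show (f i + (g j + η * Real.log (b j / R j)) - lam k * C k i j) / η
        = Real.log (b j / R j) + (f i + g j - lam k * C k i j) / η by
      field_simp; ring]
    rw [Real.exp_add, Real.exp_log (div_pos (hb' j) (hR j))]
  have hcol : ∀ j, ∑ i, ∑ k, zeta η C f gplus lam k i j = b j := by
    intro j
    simp only [hzf, ← Finset.mul_sum]
    exact div_mul_cancel₀ (b j) (hR j).ne'
  have goal1 : colSum (∑ k, zeta η C f gplus lam k) = b := by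
    funext j
    have : colSum (∑ k, zeta η C f gplus lam k) j
        = ∑ i, ∑ k, zeta η C f gplus lam k i j := by
      simp [colSum, Finset.sum_apply]
    rw [this, hcol]
  have goal2 : (∑ k, mnorm1 (zeta η C f gplus lam k)) = 1 := by
    rw [sum_mnorm1_col]
    calc ∑ j, ∑ i, ∑ k, zeta η C f gplus lam k i j = ∑ j, b j :=
          Finset.sum_congr rfl fun j _ => hcol j
      _ = 1 := hb.2
  refine ⟨goal1, goal2, ?_, ?_⟩
  · intro j
    have : colSum (∑ k, piMat η C f gplus lam k) j = b j := by
      have : colSum (∑ k, piMat η C f gplus lam k) j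
          = ∑ i, ∑ k, piMat η C f gplus lam k i j := by
        simp [colSum, Finset.sum_apply]
      rw [this]
      simp only [piMat, goal2, div_one]
      exact hcol j
    rw [this, sub_self]
  · intro g'
    have hsplit : ∀ k i j, zeta η C f g' lam k i j
        = Real.exp ((g' j - gplus j) / η) * zeta η C f gplus lam k i j := by
      intro k i j
      simp only [zeta]
      rw [← Real.exp_add]
      congr 1
      field_simp
      ring
    have hS : ∑ k, mnorm1 (zeta η C f g' lam k)
        = ∑ j, b j * Real.exp ((g' j - gplus j) / η) := by
      rw [sum_mnorm1_col]
      refine Finset.sum_congr rfl fun j _ => ?_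
      simp only [hsplit, ← Finset.mul_sum]
      rw [hcol j, mul_comm]
    have hjen := jensen_log b (fun j => (g' j - gplus j) / η) hb.1 hb.2
    rw [← hS] at hjen
    have h2 : (∑ j, g' j * b j) - (∑ j, gplus j * b j)
        ≤ η * Real.log (∑ k, mnorm1 (zeta η C f g' lam k)) := by
      have h3 := mul_le_mul_of_nonneg_left hjen hη.le
      calc (∑ j, g' j * b j) - (∑ j, gplus j * b j)
          = η * ∑ j, b j * ((g' j - gplus j) / η) := by
            rw [Finset.mul_sum, ← Finset.sum_sub_distrib]
            refine Finset.sum_congr rfl fun j _ => ?_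
            field_simp
        _ ≤ _ := h3
    simp only [Fdual, goal2, Real.log_one, mul_zero]
    linarith

/-- the closed-form f- and g-updates renormalize the respective
marginals, normalize Σ_k ‖ζ^k‖₁ to 1, zero out the corresponding partial
gradient of F, and are exact maximizers of F in their block. -/
theorem exact_block_maximization
    {n N : ℕ} (hn : 0 < n) (hN : 0 < N)
    (C : Fin N → Mat n) (a b : Fin n → ℝ)
    (ha : a ∈ stdSimplex ℝ (Fin n)) (hb : b ∈ stdSimplex ℝ (Fin n))
    (ha' : ∀ i, 0 < a i) (hb' : ∀ j, 0 < b j)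
    (η : ℝ) (hη : 0 < η)
    (f g : Fin n → ℝ) (lam : Fin N → ℝ) (hlam : lam ∈ stdSimplex ℝ (Fin N))
    (fplus gplus : Fin n → ℝ)
    (hfplus : fplus = fun i =>
      f i + η * Real.log (a i / rowSum (∑ k, zeta η C f g lam k) i))
    (hgplus : gplus = fun j =>
      g j + η * Real.log (b j / colSum (∑ k, zeta η C f g lam k) j)) :
    (rowSum (∑ k, zeta η C fplus g lam k) = a ∧
      (∑ k, mnorm1 (zeta η C fplus g lam k)) = 1 ∧
      (∀ i, a i - rowSum (∑ k, piMat η C fplus g lam k) i = 0) ∧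
      (∀ f' : Fin n → ℝ, Fdual η C a b f' g lam ≤ Fdual η C a b fplus g lam)) ∧
    (colSum (∑ k, zeta η C f gplus lam k) = b ∧
      (∑ k, mnorm1 (zeta η C f gplus lam k)) = 1 ∧
      (∀ j, b j - colSum (∑ k, piMat η C f gplus lam k) j = 0) ∧
      (∀ g' : Fin n → ℝ, Fdual η C a b f g' lam ≤ Fdual η C a b f gplus lam)) := by
  exact ⟨fblock hn hN C a b ha ha' η hη f g lam fplus hfplus,
    gblock hn hN C a b hb hb' η hη f g lam gplus hgplus⟩

end EOT

end
end

section
/- Let f, g ∈ ℝ^n and λ ∈ Δ^N satisfy Σ_{k=1}^N ‖ζ^k(f,g,λ)‖_1 = 1, and let g⁺ := g + η log(b ./ c(Σ_{k=1}^N ζ^k(f,g,λ))) (entrywise). Then Σ_{k=1}^N ‖π^k(f,g⁺,λ) − π^k(f,g,λ)‖_1 = ‖c(Σ_{k=1}^N π^k(f,g,λ)) − b‖_1. -/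
open scoped BigOperators

noncomputable section

namespace EOT

/-- the ℓ₁ change of the transport plans under the g-update equals
the ℓ₁ violation of the column marginal. -/
theorem plan_change_equals_marginal_violation
    {n N : ℕ} (hn : 0 < n) (hN : 0 < N)
    (C : Fin N → Mat n) (a b : Fin n → ℝ)
    (ha : a ∈ stdSimplex ℝ (Fin n)) (hb : b ∈ stdSimplex ℝ (Fin n))
    (hb' : ∀ j, 0 < b j)
    (η : ℝ) (hη : 0 < η)
    (f g : Fin n → ℝ) (lam : Fin N → ℝ) (hlam : lam ∈ stdSimplex ℝ (Fin N))
    (hnorm : (∑ k, mnorm1 (zeta η C f g lam k)) = 1)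
    (gplus : Fin n → ℝ)
    (hgplus : gplus = fun j =>
      g j + η * Real.log (b j / colSum (∑ k, zeta η C f g lam k) j)) :
    (∑ k, mnorm1 (fun i j => piMat η C f gplus lam k i j - piMat η C f g lam k i j))
      = vnorm1 (fun j => colSum (∑ k, piMat η C f g lam k) j - b j) := by

  classical
  have hNe : Nonempty (Fin n) := ⟨⟨0, hn⟩⟩
  have hNE : Nonempty (Fin N) := ⟨⟨0, hN⟩⟩
  set c : Fin n → ℝ := colSum (∑ k, zeta η C f g lam k) with hc
  have hS : ∀ j, ∑ k, ∑ i, zeta η C f g lam k i j = c j := by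
    intro j
    rw [hc]
    simp only [colSum, Finset.sum_apply]
    rw [Finset.sum_comm]
  have hcpos : ∀ j, 0 < c j := by
    intro j
    rw [← hS j]
    exact Finset.sum_pos (fun k _ => Finset.sum_pos (fun i _ => Real.exp_pos _)
      Finset.univ_nonempty) Finset.univ_nonempty
  have hzeta : ∀ k i j, zeta η C f gplus lam k i j
      = zeta η C f g lam k i j * (b j / c j) := by
    intro k i j
    simp only [zeta, hgplus]
    rw [show (f i + (g j + η * Real.log (b j / c j)) - lam k * C k i j) / η
        = (f i + g j - lam k * C k i j) / η + Real.log (b j / c j) from by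
      field_simp; ring]
    rw [Real.exp_add, Real.exp_log (div_pos (hb' j) (hcpos j))]
  have hnorm' : (∑ k, mnorm1 (zeta η C f gplus lam k)) = 1 := by
    have h1 : ∀ k, mnorm1 (zeta η C f gplus lam k)
        = ∑ j, (∑ i, zeta η C f g lam k i j) * (b j / c j) := by
      intro k
      simp only [mnorm1]
      rw [show (∑ i, ∑ j, |zeta η C f gplus lam k i j|)
          = ∑ i, ∑ j, zeta η C f g lam k i j * (b j / c j) from
        Finset.sum_congr rfl fun i _ => Finset.sum_congr rfl fun j _ => by
          rw [hzeta]
          exact abs_of_pos (mul_pos (Real.exp_pos _)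
            (div_pos (hb' j) (hcpos j)))]
      rw [Finset.sum_comm]
      simp [Finset.sum_mul]
    simp_rw [h1]
    rw [Finset.sum_comm]
    have h2 : ∀ j, (∑ k, (∑ i, zeta η C f g lam k i j) * (b j / c j)) = b j := by
      intro j
      rw [← Finset.sum_mul, hS j, mul_comm,
        div_mul_cancel₀ _ (ne_of_gt (hcpos j))]
    simp_rw [h2]
    exact hb.2
  have hpi : ∀ k i j, piMat η C f g lam k i j = zeta η C f g lam k i j := by
    intro k i j
    simp [piMat, hnorm]
  have hpi' : ∀ k i j, piMat η C f gplus lam k i j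
      = zeta η C f g lam k i j * (b j / c j) := by
    intro k i j
    simp [piMat, hnorm', hzeta]
  have hcol : ∀ j, colSum (∑ k, piMat η C f g lam k) j = c j := by
    intro j
    simp only [colSum, Finset.sum_apply]
    rw [← hS j, Finset.sum_comm]
    exact Finset.sum_congr rfl fun k _ => Finset.sum_congr rfl fun i _ => hpi k i j
  have key : ∀ j, 0 < c j → ∀ x : ℝ, |x * (b j / c j) - x| = x * |c j - b j| / c j → True :=
    fun _ _ _ _ => trivial
  have hLHS : (∑ k, mnorm1 (fun i j => piMat η C f gplus lam k i j
      - piMat η C f g lam k i j)) = ∑ j, |c j - b j| := by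
    have h1 : ∀ k, mnorm1 (fun i j => piMat η C f gplus lam k i j
        - piMat η C f g lam k i j)
        = ∑ j, (∑ i, zeta η C f g lam k i j) * (|c j - b j| / c j) := by
      intro k
      simp only [mnorm1]
      rw [show (∑ i, ∑ j, |piMat η C f gplus lam k i j - piMat η C f g lam k i j|)
          = ∑ i, ∑ j, zeta η C f g lam k i j * (|c j - b j| / c j) from
        Finset.sum_congr rfl fun i _ => Finset.sum_congr rfl fun j _ => by
          rw [hpi, hpi']
          have hz := Real.exp_pos ((f i + g j - lam k * C k i j) / η)
          have hcj := hcpos j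
          rw [show zeta η C f g lam k i j * (b j / c j) - zeta η C f g lam k i j
              = zeta η C f g lam k i j * ((b j - c j) / c j) from by
            field_simp]
          rw [abs_mul, abs_of_pos (show (0:ℝ) < zeta η C f g lam k i j from hz),
            abs_div, abs_of_pos hcj, abs_sub_comm]]
      rw [Finset.sum_comm]
      simp [Finset.sum_mul]
    simp_rw [h1]
    rw [Finset.sum_comm]
    refine Finset.sum_congr rfl fun j _ => ?_
    rw [← Finset.sum_mul, hS j, mul_comm, div_mul_cancel₀ _ (ne_of_gt (hcpos j))]
  rw [hLHS]
  simp only [vnorm1]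
  exact Finset.sum_congr rfl fun j _ => by rw [hcol j, abs_sub_comm]


end EOT

end
end
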